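/- The projective special linear group PSL₂(49), i.e. the quotient of the special linear group SL₂ over the field with 49 elements (GaloisField 7 2) by its centre, admits no injective group homomorphism into the general linear group GL₄(ℤ/49ℤ) of invertible 4×4 matrices over ZMod 49. Equivalently, PSL₂(49) is not isomorphic to any subgroup of GL₄(ℤ/49ℤ). -/

import Mathlib

instance : Fact (Nat.Prime 7) := ⟨by norm_num⟩

/-!
An element `M` of `GLₙ(ℤ/p²ℤ)` with `M ^ p = 1` and `n + 2 ≤ p` is congruent to `1` modulo `p`:
writing `M = 1 + N`, the reduction of `N` is nilpotent, so `p ∣ Nⁿ`, and then the binomial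
expansion of `(1 + N) ^ p = 1` divided by `p` reads `N ≡ -N² X (mod p)`, which forces `N ≡ 0`.
Elements of the form `1 + p C` commute because `p² = 0`, so any two elements of order `7` in
`GL₄(ℤ/49ℤ)` commute. In `PSL₂(49)` the images of the two elementary unipotent matrices have
order `7` and do not commute, so `PSL₂(49)` does not embed in `GL₄(ℤ/49ℤ)`.
-/

theorem eq_zero_of_isNilpotent_of_eq_sq_mul {M : Type*} [MonoidWithZero M] {a z : M}
    (ha : IsNilpotent a) (h : a = a ^ 2 * z) : a = 0 := by
  have key : ∀ k : ℕ, a = a ^ (k + 1) * z ^ k := by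
    intro k
    induction k with
    | zero => simp
    | succ k ih =>
      calc a = a ^ k * (a ^ 2 * z) * z ^ k := by rw [← h, ← pow_succ, ← ih]
        _ = a ^ (k + 2) * z ^ (k + 1) := by simp only [pow_add, pow_succ' z k, mul_assoc]
  obtain ⟨k, hk⟩ := ha
  rw [key k, pow_succ', hk, mul_zero, zero_mul]

theorem exists_one_add_pow_prime_eq {R : Type*} [Ring R] {p : ℕ} (hp : p.Prime) (N : R) :
    ∃ X : R, (1 + N) ^ p = 1 + p * (N + N ^ 2 * X) + N ^ p := by
  refine ⟨∑ k ∈ Finset.Ico 2 p, N ^ (k - 2) * ((p.choose k / p : ℕ) : R), ?_⟩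
  rw [add_comm 1 N, (Commute.one_right N).add_pow_prime_eq hp,
    ← Finset.Ico_add_one_left_eq_Ioo, zero_add, Finset.sum_eq_sum_Ico_succ_bot hp.one_lt]
  have hterm : ∀ k ∈ Finset.Ico 2 p, N ^ (k - 1) * 1 ^ (p - k - 1) * ((p.choose k / p : ℕ) : R)
      = N * (N ^ (k - 2) * ((p.choose k / p : ℕ) : R)) := by
    intro k hk
    rw [one_pow, mul_one, ← mul_assoc, ← pow_succ']
    have hk2 := (Finset.mem_Ico.mp hk).1
    congr 2
    omega
  rw [Finset.sum_congr rfl hterm, ← Finset.mul_sum]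
  simp only [one_pow, mul_one, tsub_self, pow_zero, Nat.choose_one_right, Nat.div_self hp.pos,
    Nat.cast_one]
  noncomm_ring

theorem Matrix.pow_card_eq_zero_of_isNilpotent {ι K : Type*} [Fintype ι] [DecidableEq ι]
    [Field K] {M : Matrix ι ι K} (hM : IsNilpotent M) : M ^ Fintype.card ι = 0 := by
  have h := (Matrix.isNilpotent_charpoly_sub_pow_of_isNilpotent hM).eq_zero
  rw [sub_eq_zero] at h
  simpa [h] using M.aeval_self_charpoly

namespace ZMod

variable {p : ℕ} [NeZero p]

theorem exists_eq_natCast_mul_of_castHom_eq_zero {x : ZMod (p ^ 2)}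
    (hx : castHom (dvd_pow_self p two_ne_zero) (ZMod p) x = 0) : ∃ y, x = p * y := by
  rw [castHom_apply, ← natCast_val, natCast_eq_zero_iff] at hx
  obtain ⟨k, hk⟩ := hx
  exact ⟨k, by rw [← natCast_zmod_val x, hk, Nat.cast_mul]⟩

theorem castHom_eq_zero_of_natCast_mul_eq_zero {x : ZMod (p ^ 2)}
    (hx : (p : ZMod (p ^ 2)) * x = 0) : castHom (dvd_pow_self p two_ne_zero) (ZMod p) x = 0 := by
  rw [← natCast_zmod_val x, ← Nat.cast_mul, natCast_eq_zero_iff] at hx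
  rw [castHom_apply, ← natCast_val, natCast_eq_zero_iff]
  exact Nat.dvd_of_mul_dvd_mul_left (NeZero.pos p) (by rwa [← pow_two])

end ZMod

namespace Matrix

variable {ι : Type*} [DecidableEq ι] {p : ℕ}

theorem natCast_zmod_self : (p : Matrix ι ι (ZMod p)) = 0 := by
  rw [← diagonal_natCast, ZMod.natCast_self, diagonal_zero]

variable [Fintype ι]

def reduceMod (ι : Type*) [Fintype ι] [DecidableEq ι] (p : ℕ) :
    Matrix ι ι (ZMod (p ^ 2)) →+* Matrix ι ι (ZMod p) :=
  (ZMod.castHom (dvd_pow_self p two_ne_zero) (ZMod p)).mapMatrix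

theorem exists_eq_natCast_mul_of_reduceMod_eq_zero [NeZero p] {A : Matrix ι ι (ZMod (p ^ 2))}
    (hA : reduceMod ι p A = 0) : ∃ D, A = (p : Matrix ι ι (ZMod (p ^ 2))) * D := by
  choose D hD using fun i j ↦
    ZMod.exists_eq_natCast_mul_of_castHom_eq_zero (congrFun (congrFun hA i) j)
  refine ⟨of D, ?_⟩
  ext i j
  rw [← nsmul_eq_mul, smul_apply, nsmul_eq_mul, hD, of_apply]

theorem reduceMod_eq_zero_of_natCast_mul_eq_zero [NeZero p] {A : Matrix ι ι (ZMod (p ^ 2))}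
    (hA : (p : Matrix ι ι (ZMod (p ^ 2))) * A = 0) : reduceMod ι p A = 0 := by
  ext i j
  exact ZMod.castHom_eq_zero_of_natCast_mul_eq_zero (by
    simpa [← nsmul_eq_mul] using congrFun (congrFun hA i) j)

variable [hp : Fact p.Prime]

theorem reduceMod_eq_one_of_pow_eq_one (hcard : Fintype.card ι + 2 ≤ p)
    {M : Matrix ι ι (ZMod (p ^ 2))} (hM : M ^ p = 1) : reduceMod ι p M = 1 := by
  set ψ := reduceMod ι p
  set N := M - 1
  have hMN : M = 1 + N := (add_sub_cancel _ _).symm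
  obtain ⟨X, hX⟩ := exists_one_add_pow_prime_eq hp.out N
  rw [← hMN, hM, add_assoc, left_eq_add] at hX
  have hNp : ψ N ^ p = 0 := by
    simpa [ψ, natCast_zmod_self] using congrArg ψ hX
  obtain ⟨D, hD⟩ := exists_eq_natCast_mul_of_reduceMod_eq_zero (A := N ^ Fintype.card ι)
    (by rw [map_pow, pow_card_eq_zero_of_isNilpotent ⟨p, hNp⟩])
  have hpow : N ^ p = N ^ 2 * N ^ (p - Fintype.card ι - 2) * N ^ Fintype.card ι := by
    rw [← pow_add, ← pow_add]
    congr 1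
    omega
  -- `p ∣ Nⁿ` makes the last binomial term `N ^ p` divisible by `p` as well.
  have hY : (p : Matrix ι ι (ZMod (p ^ 2))) *
      (N + N ^ 2 * (X + N ^ (p - Fintype.card ι - 2) * D)) = 0 := by
    rw [← hX, hpow, hD, ← mul_assoc, ← (Nat.cast_commute p _).eq]
    noncomm_ring
  have hψY := reduceMod_eq_zero_of_natCast_mul_eq_zero hY
  have hψN : ψ N = ψ N ^ 2 * -ψ (X + N ^ (p - Fintype.card ι - 2) * D) := by
    rw [map_add, map_mul, map_pow] at hψY
    rw [mul_neg, eq_neg_iff_add_eq_zero, hψY]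
  rw [hMN, map_add, map_one, eq_zero_of_isNilpotent_of_eq_sq_mul ⟨p, hNp⟩ hψN, add_zero]

theorem exists_eq_one_add_natCast_mul_of_pow_eq_one (hcard : Fintype.card ι + 2 ≤ p)
    {M : Matrix ι ι (ZMod (p ^ 2))} (hM : M ^ p = 1) :
    ∃ C, M = 1 + (p : Matrix ι ι (ZMod (p ^ 2))) * C := by
  obtain ⟨C, hC⟩ := exists_eq_natCast_mul_of_reduceMod_eq_zero (A := M - 1)
    (by rw [map_sub, map_one, reduceMod_eq_one_of_pow_eq_one hcard hM, sub_self])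
  exact ⟨C, by rw [← hC, add_sub_cancel]⟩

theorem commute_of_pow_eq_one (hcard : Fintype.card ι + 2 ≤ p)
    {A B : Matrix ι ι (ZMod (p ^ 2))} (hA : A ^ p = 1) (hB : B ^ p = 1) : Commute A B := by
  obtain ⟨C, rfl⟩ := exists_eq_one_add_natCast_mul_of_pow_eq_one hcard hA
  obtain ⟨D, rfl⟩ := exists_eq_one_add_natCast_mul_of_pow_eq_one hcard hB
  have hp2 : ∀ X Y : Matrix ι ι (ZMod (p ^ 2)),
      (p : Matrix ι ι (ZMod (p ^ 2))) * X * ((p : Matrix ι ι (ZMod (p ^ 2))) * Y) = 0 := by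
    intro X Y
    rw [mul_assoc, ← mul_assoc X, ← (Nat.cast_commute p X).eq, ← mul_assoc, ← mul_assoc,
      ← Nat.cast_mul, ← pow_two, ← diagonal_natCast, ZMod.natCast_self, diagonal_zero,
      zero_mul, zero_mul]
  exact (Commute.one_right _).add_right ((Commute.one_left _).add_left
    ((hp2 C D).trans (hp2 D C).symm))

theorem GeneralLinearGroup.commute_of_pow_eq_one (hcard : Fintype.card ι + 2 ≤ p)
    {A B : GL ι (ZMod (p ^ 2))} (hA : A ^ p = 1) (hB : B ^ p = 1) : Commute A B :=
  Units.ext <| Matrix.commute_of_pow_eq_one hcard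
    (by rw [← Units.val_pow_eq_pow_val, hA, Units.val_one])
    (by rw [← Units.val_pow_eq_pow_val, hB, Units.val_one])

end Matrix

namespace Matrix.SpecialLinearGroup

variable {ι F : Type*} [DecidableEq ι] [Fintype ι] [CommRing F]

theorem transvection_pow {i j : ι} (hij : i ≠ j) (b : F) (k : ℕ) :
    transvection hij b ^ k = transvection hij (k * b) := by
  induction k with
  | zero => simp
  | succ k ih => rw [pow_succ, ih, ← transvection_add, Nat.cast_succ, add_one_mul]

theorem transvection_pow_char {i j : ι} (hij : i ≠ j) (b : F) (p : ℕ) [CharP F p] :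
    transvection hij b ^ p = 1 := by
  rw [transvection_pow, CharP.cast_eq_zero, zero_mul, transvection_coeff_zero]

theorem not_commute_mk_transvection [Nontrivial F] {i j : ι} (hij : i ≠ j) :
    ¬ Commute
      (QuotientGroup.mk (s := Subgroup.center (SpecialLinearGroup ι F)) (transvection hij 1))
      (QuotientGroup.mk (transvection hij.symm 1)) := by
  intro h
  set t := transvection hij (1 : F)
  set t' := transvection hij.symm (1 : F)
  obtain ⟨r, -, hr⟩ := mem_center_iff.mp (QuotientGroup.eq.mp h.eq)
  have hmat : ((t' * t : SpecialLinearGroup ι F) : Matrix ι ι F) =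
      (t * t' : Matrix ι ι F) * scalar ι r := by
    simp only [hr, ← coe_mul, mul_inv_cancel_left]
  have hij_entry : (1 : F) = r := by
    simpa [t, t', transvection_coe, mul_add, add_mul, hij, hij.symm] using
      congrFun (congrFun hmat i) j
  have hii_entry : (1 : F) = r + r := by
    simpa [t, t', transvection_coe, mul_add, add_mul, hij, hij.symm] using
      congrFun (congrFun hmat i) i
  subst hij_entry
  exact one_ne_zero (left_eq_add.mp hii_entry)

end Matrix.SpecialLinearGroup

theorem psl_two_49_not_subgroup_GL4_Z49 :
    ¬ ∃ f : (Matrix.SpecialLinearGroup (Fin 2) (GaloisField 7 2) ⧸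
        Subgroup.center (Matrix.SpecialLinearGroup (Fin 2) (GaloisField 7 2))) →*
        Matrix.GeneralLinearGroup (Fin 4) (ZMod 49),
      Function.Injective f := by
  rintro ⟨f, hf⟩
  have h01 : (0 : Fin 2) ≠ 1 := zero_ne_one
  have horder : ∀ {i j : Fin 2} (hij : i ≠ j),
      f (QuotientGroup.mk (Matrix.SpecialLinearGroup.transvection hij (1 : GaloisField 7 2))) ^ 7 = 1 := fun hij ↦ by
    rw [← map_pow, ← QuotientGroup.mk_pow, Matrix.SpecialLinearGroup.transvection_pow_char,
      QuotientGroup.mk_one, map_one]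
  have hcomm := Matrix.GeneralLinearGroup.commute_of_pow_eq_one (p := 7) (by simp)
    (horder h01) (horder h01.symm)
  exact Matrix.SpecialLinearGroup.not_commute_mk_transvection h01 (hcomm.of_map hf)
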